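/- arXiv:2111.11470 — 2 statements merged into one kernel-verified Lean document; each statement's English description precedes it below -/
import Mathlib

section
/- Let α > 0 be a rational number, Γ a finite simple graph, and W ⊊ U ⊊ A ⊆ V(Γ) vertex subsets such that the pair (A,U) is α-neutral, the pair (U,W) is α-safe, and Γ contains at least one edge with one endpoint in A \ U and the other endpoint in U \ W. Then the pair (A,W) is α-safe. -/
open Finset

variable {V : Type*} [Fintype V] [DecidableEq V]

/-- The number of edges of `Γ` with both endpoints in `A` and at least one endpoint
in `A \ B`; this is `e(A,B)` from the paper. -/
noncomputable def edgeCount (Γ : SimpleGraph V) (A B : Finset V) : ℕ :=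
  Nat.card {e : Sym2 V // e ∈ Γ.edgeSet ∧ (∀ x ∈ e, x ∈ A) ∧ ∃ x ∈ e, x ∈ A ∧ x ∉ B}

/-- `f_α(A,B) = v(A,B) - α ⬝ e(A,B)`. -/
noncomputable def fW (Γ : SimpleGraph V) (α : ℝ) (A B : Finset V) : ℝ :=
  ((A \ B).card : ℝ) - α * (edgeCount Γ A B : ℝ)

/-- The pair `(A,B)` is `α`-safe. -/
def IsSafe (Γ : SimpleGraph V) (α : ℝ) (A B : Finset V) : Prop :=
  ∀ C : Finset V, B ⊂ C → C ⊆ A → 0 < fW Γ α C B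

/-- The pair `(A,B)` is `α`-rigid. -/
def IsRigid (Γ : SimpleGraph V) (α : ℝ) (A B : Finset V) : Prop :=
  ∀ C : Finset V, B ⊆ C → C ⊂ A → fW Γ α A C < 0

/-- The pair `(A,B)` is `α`-neutral. -/
def IsNeutral (Γ : SimpleGraph V) (α : ℝ) (A B : Finset V) : Prop :=
  (∀ C : Finset V, B ⊂ C → C ⊂ A → 0 < fW Γ α C B) ∧ fW Γ α A B = 0

set_option linter.unusedSectionVars false

def edgeSetOf (Γ : SimpleGraph V) (A B : Finset V) : Set (Sym2 V) :=
  {e : Sym2 V | e ∈ Γ.edgeSet ∧ (∀ x ∈ e, x ∈ A) ∧ ∃ x ∈ e, x ∈ A ∧ x ∉ B}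

lemma edgeCount_eq_ncard (Γ : SimpleGraph V) (A B : Finset V) :
    edgeCount Γ A B = (edgeSetOf Γ A B).ncard := by
  exact Nat.card_coe_set_eq (edgeSetOf Γ A B)

lemma edgeCount_self (Γ : SimpleGraph V) (B : Finset V) : edgeCount Γ B B = 0 := by
  rw [edgeCount_eq_ncard]
  convert Set.ncard_empty (Sym2 V)
  ext e
  simp only [edgeSetOf, Set.mem_setOf_eq, Set.mem_empty_iff_false, iff_false]
  rintro ⟨-, -, x, -, hx, hx'⟩
  exact hx' hx

lemma fW_self (Γ : SimpleGraph V) (α : ℝ) (B : Finset V) : fW Γ α B B = 0 := by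
  simp [fW, edgeCount_self]

set_option linter.unusedSectionVars false

lemma edgeSetOf_subset (Γ : SimpleGraph V) (C U W : Finset V) :
    edgeSetOf Γ C W ⊆ edgeSetOf Γ (C ∩ U) W ∪ edgeSetOf Γ (C ∪ U) U := by
  rintro e ⟨he, hall, x, hxe, hxC, hxW⟩
  by_cases hU : ∀ z ∈ e, z ∈ U
  · left
    exact ⟨he, fun z hz => Finset.mem_inter.2 ⟨hall z hz, hU z hz⟩, x, hxe,
      Finset.mem_inter.2 ⟨hxC, hU x hxe⟩, hxW⟩
  · right
    push_neg at hU
    obtain ⟨z, hze, hzU⟩ := hU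
    exact ⟨he, fun w hw => Finset.mem_union.2 (Or.inl (hall w hw)), z, hze,
      Finset.mem_union.2 (Or.inl (hall z hze)), hzU⟩

lemma vertex_split (C U W : Finset V) (hWU : W ⊆ U) :
    ((C \ W).card : ℝ) = (((C ∩ U) \ W).card : ℝ) + (((C ∪ U) \ U).card : ℝ) := by
  have h1 : (C ∪ U) \ U = C \ U := by ext a; simp [Finset.mem_sdiff]; tauto
  have h2 : C \ W = ((C ∩ U) \ W) ∪ (C \ U) := by
    ext a
    simp only [Finset.mem_sdiff, Finset.mem_union, Finset.mem_inter]
    constructor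
    · rintro ⟨hC, hW⟩
      by_cases hU : a ∈ U
      · exact Or.inl ⟨⟨hC, hU⟩, hW⟩
      · exact Or.inr ⟨hC, hU⟩
    · rintro (⟨⟨hC, _⟩, hW⟩ | ⟨hC, hU⟩)
      · exact ⟨hC, hW⟩
      · exact ⟨hC, fun h => hU (hWU h)⟩
  have hdisj : Disjoint ((C ∩ U) \ W) (C \ U) := by
    rw [Finset.disjoint_left]
    intro a ha hb
    exact (Finset.mem_sdiff.1 hb).2 (Finset.mem_inter.1 (Finset.mem_sdiff.1 ha).1).2
  rw [h1, h2, Finset.card_union_of_disjoint hdisj]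
  push_cast
  ring

/-- Claim 1 of the paper: if `(A,U)` is α-neutral, `(U,W)` is α-safe
and there is an edge between `A \ U` and `U \ W`, then `(A,W)` is α-safe,
for rational `α > 0`. -/
theorem stmt5 (Γ : SimpleGraph V) (α : ℚ) (hα : 0 < α) (A U W : Finset V)
    (hWU : W ⊂ U) (hUA : U ⊂ A)
    (hneut : IsNeutral Γ (α : ℝ) A U)
    (hsafe : IsSafe Γ (α : ℝ) U W)
    (hedge : ∃ x y, Γ.Adj x y ∧ x ∈ A ∧ x ∉ U ∧ y ∈ U ∧ y ∉ W) :
    IsSafe Γ (α : ℝ) A W := by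

  obtain ⟨x, y, hadj, hxA, hxU, hyU, hyW⟩ := hedge
  intro C hWC hCA
  have hα' : (0 : ℝ) < (α : ℝ) := by exact_mod_cast hα
  have hWsubU : W ⊆ U := hWU.subset
  have hCU_A : C ∪ U ⊆ A := Finset.union_subset hCA hUA.subset
  have hsub := edgeSetOf_subset Γ C U W
  have hvs := vertex_split C U W hWsubU
  have he_weak : (edgeCount Γ C W : ℝ) ≤ edgeCount Γ (C ∩ U) W + edgeCount Γ (C ∪ U) U := by
    rw [edgeCount_eq_ncard, edgeCount_eq_ncard, edgeCount_eq_ncard]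
    exact_mod_cast (Set.ncard_le_ncard hsub (Set.toFinite _)).trans (Set.ncard_union_le _ _)
  by_cases h1 : W ⊂ C ∩ U
  · have hf1 : 0 < fW Γ (α : ℝ) (C ∩ U) W := hsafe (C ∩ U) h1 Finset.inter_subset_right
    have hf2 : 0 ≤ fW Γ (α : ℝ) (C ∪ U) U := by
      rcases (Finset.subset_union_right : U ⊆ C ∪ U).eq_or_ssubset with h | h
      · rw [← h]; exact le_of_eq (fW_self Γ _ U).symm
      · rcases hCU_A.eq_or_ssubset with h' | h'
        · rw [h']; exact le_of_eq hneut.2.symm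
        · exact (hneut.1 (C ∪ U) h h').le
    unfold fW at hf1 hf2 ⊢
    nlinarith [mul_le_mul_of_nonneg_left he_weak hα'.le]
  · have hWsub : W ⊆ C ∩ U := Finset.subset_inter hWC.subset hWsubU
    have hWeq : C ∩ U = W := by
      by_contra h
      exact h1 (hWsub.ssubset_of_ne (Ne.symm h))
    have hf1 : fW Γ (α : ℝ) (C ∩ U) W = 0 := by rw [hWeq]; exact fW_self Γ _ W
    have hUssub : U ⊂ C ∪ U := by
      obtain ⟨c, hcC, hcW⟩ := Finset.exists_of_ssubset hWC
      have hcU : c ∉ U := fun h => hcW (hWeq ▸ Finset.mem_inter.2 ⟨hcC, h⟩)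
      exact (Finset.ssubset_iff_of_subset Finset.subset_union_right).2
        ⟨c, Finset.mem_union_left _ hcC, hcU⟩
    rcases hCU_A.eq_or_ssubset with h2 | h2
    · -- strict case: C ∩ U = W, C ∪ U = A
      have he0mem : s(x, y) ∈ edgeSetOf Γ (C ∪ U) U := by
        refine ⟨Γ.mem_edgeSet.2 hadj, ?_, x, by simp, ?_, hxU⟩
        · intro z hz
          rw [Sym2.mem_iff] at hz
          rcases hz with rfl | rfl
          · rw [h2]; exact hxA
          · exact Finset.mem_union_right _ hyU
        · rw [h2]; exact hxA
      have he0not : s(x, y) ∉ edgeSetOf Γ C W := by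
        rintro ⟨-, hall, -⟩
        have hyC : y ∈ C := hall y (by simp)
        exact hyW (hWeq ▸ Finset.mem_inter.2 ⟨hyC, hyU⟩)
      have he_strict : (edgeCount Γ C W : ℝ) + 1 ≤
          edgeCount Γ (C ∩ U) W + edgeCount Γ (C ∪ U) U := by
        rw [edgeCount_eq_ncard, edgeCount_eq_ncard, edgeCount_eq_ncard]
        have hins : insert s(x, y) (edgeSetOf Γ C W) ⊆
            edgeSetOf Γ (C ∩ U) W ∪ edgeSetOf Γ (C ∪ U) U := by
          rw [Set.insert_subset_iff]
          exact ⟨Or.inr he0mem, hsub⟩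
        have hc := (Set.ncard_le_ncard hins (Set.toFinite _)).trans (Set.ncard_union_le _ _)
        rw [Set.ncard_insert_of_notMem he0not (Set.toFinite _)] at hc
        exact_mod_cast hc
      have hf2 : fW Γ (α : ℝ) (C ∪ U) U = 0 := by rw [h2]; exact hneut.2
      unfold fW at hf1 hf2 ⊢
      nlinarith [mul_le_mul_of_nonneg_left he_strict hα'.le]
    · have hf2 : 0 < fW Γ (α : ℝ) (C ∪ U) U := hneut.1 (C ∪ U) hUssub h2
      unfold fW at hf1 hf2 ⊢
      nlinarith [mul_le_mul_of_nonneg_left he_weak hα'.le]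
end

section
/- Let Γ be a finite simple graph, z ∈ V(Γ), i ≥ 0 an integer, and {z} ⊊ A_0 ⊊ A_1 ⊊ ⋯ ⊊ A_i ⊆ V(Γ) vertex subsets such that the pair (A_0,{z}) is 3/5-neutral or 3/5-rigid, and the pair (A_j,A_{j−1}) is 3/5-rigid for every j ∈ {1,…,i}. Then |A_i| − (3/5)·e(Γ|_{A_i}) ≤ 1 − i/5, where e(Γ|_{A_i}) is the number of edges of the induced subgraph of Γ on A_i. -/
open Finset

variable {V : Type*} [Fintype V] [DecidableEq V]

set_option linter.unusedSectionVars false in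
lemma edgeCount_eq_ncard_s8 (Γ : SimpleGraph V) (A B : Finset V) :
    edgeCount Γ A B =
    Set.ncard {e : Sym2 V | e ∈ Γ.edgeSet ∧ (∀ x ∈ e, x ∈ A) ∧ ∃ x ∈ e, x ∈ A ∧ x ∉ B} := by
  exact Nat.card_coe_set_eq _

lemma edgeCount_split (Γ : SimpleGraph V) {A B : Finset V} (hBA : B ⊆ A) :
    edgeCount Γ A ∅ = edgeCount Γ B ∅ + edgeCount Γ A B := by
  classical
  rw [edgeCount_eq_ncard_s8, edgeCount_eq_ncard_s8, edgeCount_eq_ncard_s8]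
  rw [← Set.ncard_union_eq ?_ (Set.toFinite _) (Set.toFinite _)]
  · congr 1
    ext e
    induction e with
    | _ a b =>
      simp only [Set.mem_setOf_eq, Set.mem_union, Sym2.mem_iff, Finset.notMem_empty,
        not_false_iff, and_true]
      constructor
      · rintro ⟨he, hall, -⟩
        by_cases hb : a ∈ B ∧ b ∈ B
        · exact Or.inl ⟨he, by rintro x (rfl|rfl) <;> simp [hb.1, hb.2], ⟨a, Or.inl rfl, hb.1⟩⟩
        · right
          refine ⟨he, hall, ?_⟩
          rcases not_and_or.mp hb with h | h
          · exact ⟨a, Or.inl rfl, hall a (Or.inl rfl), h⟩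
          · exact ⟨b, Or.inr rfl, hall b (Or.inr rfl), h⟩
      · rintro (⟨he, hall, -⟩ | ⟨he, hall, -⟩)
        · exact ⟨he, fun x hx => hBA (hall x hx), ⟨a, Or.inl rfl, hBA (hall a (Or.inl rfl))⟩⟩
        · exact ⟨he, hall, ⟨a, Or.inl rfl, hall a (Or.inl rfl)⟩⟩
  · rw [Set.disjoint_left]
    rintro e ⟨-, hall, -⟩ ⟨-, -, x, hx, -, hxB⟩
    exact hxB (hall x hx)

lemma edgeCount_singleton (Γ : SimpleGraph V) (z : V) :
    edgeCount Γ {z} (∅ : Finset V) = 0 := by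
  rw [edgeCount_eq_ncard_s8, Set.ncard_eq_zero]
  ext e
  induction e with
  | _ a b =>
    simp only [Set.mem_setOf_eq, Set.mem_empty_iff_false, iff_false, not_and]
    intro he hall
    have ha := hall a (Sym2.mem_mk_left a b)
    have hb := hall b (Sym2.mem_mk_right a b)
    simp only [Finset.mem_singleton] at ha hb
    exact fun _ => (Γ.ne_of_adj ((SimpleGraph.mem_edgeSet Γ).mp he)) (ha.trans hb.symm)

lemma fW_split (Γ : SimpleGraph V) (α : ℝ) {A B : Finset V} (hBA : B ⊆ A) :
    fW Γ α A ∅ = fW Γ α B ∅ + fW Γ α A B := by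
  unfold fW
  rw [edgeCount_split Γ hBA]
  have hcard : (A \ B).card + B.card = A.card := Finset.card_sdiff_add_card_eq_card hBA
  simp only [Finset.sdiff_empty]
  have : (A.card : ℝ) = ((A \ B).card : ℝ) + (B.card : ℝ) := by exact_mod_cast hcard.symm
  rw [this]; push_cast; ring

set_option linter.unusedSectionVars false in
lemma fW_le_neg_fifth {Γ : SimpleGraph V} {A B : Finset V} (h : fW Γ (3/5) A B < 0) :
    fW Γ (3/5) A B ≤ -(1/5) := by
  have heq : fW Γ (3/5) A B =
      ((5 * ((A \ B).card : ℤ) - 3 * (edgeCount Γ A B : ℤ) : ℤ) : ℝ) / 5 := by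
    unfold fW; push_cast; ring
  rw [heq] at h ⊢
  have hn : (5 * ((A \ B).card : ℤ) - 3 * (edgeCount Γ A B : ℤ)) < 0 := by
    by_contra hc
    push_neg at hc
    have : (0:ℝ) ≤ ((5 * ((A \ B).card : ℤ) - 3 * (edgeCount Γ A B : ℤ) : ℤ) : ℝ) := by
      exact_mod_cast hc
    linarith
  have hn1 : (5 * ((A \ B).card : ℤ) - 3 * (edgeCount Γ A B : ℤ)) ≤ -1 := by omega
  have : ((5 * ((A \ B).card : ℤ) - 3 * (edgeCount Γ A B : ℤ) : ℤ) : ℝ) ≤ -1 := by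
    exact_mod_cast hn1
  linarith

/-- Property 1 of the paper: along a chain
`{z} ⊊ A₀ ⊊ A₁ ⊊ ⋯ ⊊ Aᵢ` with `(A₀,{z})` being 3/5-neutral or 3/5-rigid and each
`(Aⱼ,Aⱼ₋₁)` 3/5-rigid, we get `|Aᵢ| - (3/5)·e(Γ|_{Aᵢ}) ≤ 1 - i/5`. -/
theorem stmt8 (Γ : SimpleGraph V) (z : V) (i : ℕ) (A : ℕ → Finset V)
    (hz : ({z} : Finset V) ⊂ A 0)
    (hchain : ∀ j < i, A j ⊂ A (j + 1))
    (h0 : IsNeutral Γ (3/5) (A 0) {z} ∨ IsRigid Γ (3/5) (A 0) {z})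
    (hrig : ∀ j < i, IsRigid Γ (3/5) (A (j + 1)) (A j)) :
    ((A i).card : ℝ) - (3/5) * (edgeCount Γ (A i) ∅ : ℝ) ≤ 1 - (i : ℝ) / 5 := by
  have hsub : ∀ j, j ≤ i → fW Γ (3/5) (A j) ∅ ≤ 1 - (j : ℝ)/5 := by
    intro j hj
    induction j with
    | zero =>
      have h1 : fW Γ (3/5) (A 0) ∅ = fW Γ (3/5) {z} ∅ + fW Γ (3/5) (A 0) {z} :=
        fW_split Γ _ hz.subset
      have hsing : fW Γ (3/5) ({z} : Finset V) ∅ = 1 := by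
        unfold fW; rw [edgeCount_singleton]; simp
      have h2 : fW Γ (3/5) (A 0) {z} ≤ 0 := by
        rcases h0 with h | h
        · exact le_of_eq h.2
        · exact le_of_lt (h {z} (le_refl _) hz)
      rw [h1, hsing]
      norm_num
      linarith
    | succ j ih =>
      have hlt : j < i := hj
      have h1 := fW_split Γ (3/5) (hchain j hlt).subset
      have h2 : fW Γ (3/5) (A (j+1)) (A j) ≤ -(1/5) :=
        fW_le_neg_fifth (hrig j hlt (A j) (le_refl _) (hchain j hlt))
      have h3 := ih (le_of_lt hlt)
      rw [h1]
      push_cast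
      linarith
  have h := hsub i le_rfl
  unfold fW at h
  rw [Finset.sdiff_empty] at h
  exact h
end
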